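/- Correctness of the arity-generic self-application example: for every natural number n, λx_1…x_n.((x_1 x_2 ⋯ x_n) (x_1 x_2 ⋯ x_n)) =βη (S_n I I), generalizing Church's term D = λx.(x x) = (S I I). -/

import Mathlib

/-!
Since `I` is closed, two β-steps turn `S_n I I` into `λx⃗. (I x⃗) (I x⃗)`, and one more β-step on each
side contracts the head redex `I x₁` of `I x₁ ⋯ xₙ`, leaving `λx⃗. (x₁ ⋯ xₙ) (x₁ ⋯ xₙ)`.
-/

namespace LC

/-- Untyped λ-terms, de Bruijn indices. -/
inductive Tm : Type
  | var : ℕ → Tm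
  | app : Tm → Tm → Tm
  | lam : Tm → Tm
  deriving DecidableEq

namespace Tm

/-- Shift the free variables ≥ c up by one. -/
def lift (c : ℕ) : Tm → Tm
  | var n => if n < c then var n else var (n + 1)
  | app a b => app (lift c a) (lift c b)
  | lam a => lam (lift (c + 1) a)

/-- Substitute `s` for the free variable `k`. -/
def subst (k : ℕ) (s : Tm) : Tm → Tm
  | var n => if n = k then s else if k < n then var (n - 1) else var n
  | app a b => app (subst k s a) (subst k s b)
  | lam a => lam (subst (k + 1) (lift 0 s) a)

/-- One-step βη-reduction (with congruence closure). -/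
inductive Step : Tm → Tm → Prop
  | beta (a b : Tm) : Step (app (lam a) b) (subst 0 b a)
  | eta (a : Tm) : Step (lam (app (lift 0 a) (var 0))) a
  | appL {a a' : Tm} (b : Tm) : Step a a' → Step (app a b) (app a' b)
  | appR (a : Tm) {b b' : Tm} : Step b b' → Step (app a b) (app a b')
  | lamCongr {a a' : Tm} : Step a a' → Step (lam a) (lam a')

/-- βη-equivalence: the equivalence relation generated by βη-reduction. -/
def BetaEta : Tm → Tm → Prop := Relation.EqvGen Step

/-- Multi-step βη-reduction: reflexive-transitive closure of βη-reduction. -/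
def Reduces : Tm → Tm → Prop := Relation.ReflTransGen Step

/-- I = λx.x -/
def I : Tm := lam (var 0)
/-- K = λxy.x -/
def K : Tm := lam (lam (var 1))
/-- B = λxyz.(x (y z)) -/
def B : Tm := lam (lam (lam (app (var 2) (app (var 1) (var 0)))))
/-- C = λxyz.(x z y) -/
def C : Tm := lam (lam (lam (app (app (var 2) (var 0)) (var 1))))
/-- S = λxyz.(x z (y z)) -/
def S : Tm := lam (lam (lam (app (app (var 2) (var 0)) (app (var 1) (var 0)))))

/-- body of the n-th Church numeral: s (s ⋯ (s z)⋯), n times. -/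
def churchBody : ℕ → Tm
  | 0 => var 0
  | n + 1 => app (var 1) (churchBody n)

/-- The n-th Church numeral c_n = λsz.(s (s ⋯ (s z)⋯)). -/
def church (n : ℕ) : Tm := lam (lam (churchBody n))

/-- n nested λ-abstractions. -/
def lamN : ℕ → Tm → Tm
  | 0, t => t
  | n + 1, t => lam (lamN n t)

/-- Shift all free variables up by n. -/
def liftN (n : ℕ) (t : Tm) : Tm := (lift 0)^[n] t

/-- t (var (a+k-1)) ⋯ (var (a+1)) (var a) : left-associated application of t
to k variables with descending indices. -/
def appVars (t : Tm) (a k : ℕ) : Tm :=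
  ((List.range k).reverse).foldl (fun s i => app s (var (a + i))) t

/-- t (var a) (var (a+1)) ⋯ (var (a+k-1)) : left-associated application of t
to k variables with ascending indices. -/
def appVarsAsc (t : Tm) (a k : ℕ) : Tm :=
  (List.range k).foldl (fun s i => app s (var (a + i))) t

/-- Left-associated application of t to a list of terms. -/
def appList (t : Tm) (l : List Tm) : Tm := l.foldl app t

/-- K_n = λp x_1…x_n. p -/
def Kn (n : ℕ) : Tm := lamN (n + 1) (var n)
/-- S_n = λpq x_1…x_n.(p x_1⋯x_n (q x_1⋯x_n)) -/
def Sn (n : ℕ) : Tm :=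
  lamN (n + 2) (app (appVars (var (n + 1)) 0 n) (appVars (var n) 0 n))
/-- B_n = λpq x_1…x_n.(p (q x_1⋯x_n)) -/
def Bn (n : ℕ) : Tm := lamN (n + 2) (app (var (n + 1)) (appVars (var n) 0 n))
/-- C_n = λpq x_1…x_n.(p x_1⋯x_n q) -/
def Cn (n : ℕ) : Tm := lamN (n + 2) (app (appVars (var (n + 1)) 0 n) (var n))

def ClosedAt : ℕ → Tm → Prop
  | k, var n => n < k
  | k, app a b => ClosedAt k a ∧ ClosedAt k b
  | k, lam a => ClosedAt (k + 1) a

lemma closedAt_zero_I : ClosedAt 0 I := by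
  simp [I, ClosedAt]

lemma lift_eq_self_of_closedAt {k c : ℕ} {t : Tm} (ht : ClosedAt k t) (hc : k ≤ c) :
    lift c t = t := by
  induction t generalizing k c with
  | var n =>
    simp only [ClosedAt] at ht
    simp [lift, show n < c by omega]
  | app a b iha ihb => simp [lift, iha ht.1 hc, ihb ht.2 hc]
  | lam a ih => simp [lift, ih ht (Nat.succ_le_succ hc)]

lemma subst_eq_self_of_closedAt {k j : ℕ} {s t : Tm} (ht : ClosedAt k t) (hj : k ≤ j) :
    subst j s t = t := by
  induction t generalizing k j s with
  | var n =>
    simp only [ClosedAt] at ht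
    simp [subst, show n ≠ j by omega, show ¬ j < n by omega]
  | app a b iha ihb => simp [subst, iha ht.1 hj, ihb ht.2 hj]
  | lam a ih => simp [subst, ih ht (Nat.succ_le_succ hj)]

lemma liftN_eq_self_of_closedAt {s : Tm} (hs : ClosedAt 0 s) (m : ℕ) : liftN m s = s :=
  Function.iterate_fixed (lift_eq_self_of_closedAt hs le_rfl) m

lemma subst_lamN (k m : ℕ) (s t : Tm) :
    subst k s (lamN m t) = lamN m (subst (k + m) (liftN m s) t) := by
  induction m generalizing k s with
  | zero => rfl
  | succ m ih =>
    rw [lamN, subst, ih, liftN, liftN, Function.iterate_succ_apply, Nat.add_right_comm]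
    rfl

lemma appVars_succ (t : Tm) (a k : ℕ) :
    appVars t a (k + 1) = appVars (app t (var (a + k))) a k := by
  simp [appVars, List.range_succ]

lemma subst_appVars {j a m : ℕ} (s t : Tm) (h : a + m ≤ j) :
    subst j s (appVars t a m) = appVars (subst j s t) a m := by
  induction m generalizing t with
  | zero => rfl
  | succ m ih =>
    rw [appVars_succ, appVars_succ, ih _ (by omega)]
    simp [subst, show a + m ≠ j by omega, show ¬ j < a + m by omega]

lemma step_I_app (u : Tm) : Step (app I u) u := by
  simpa [I, subst] using Step.beta (var 0) u

lemma Step.appVars {t t' : Tm} (h : Step t t') (a k : ℕ) :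
    Step (appVars t a k) (appVars t' a k) := by
  induction k generalizing t t' with
  | zero => exact h
  | succ k ih => rw [appVars_succ, appVars_succ]; exact ih (Step.appL _ h)

lemma step_appVars_I (a m : ℕ) : Step (appVars I a (m + 1)) (appVars (var (a + m)) a m) := by
  rw [appVars_succ]
  exact (step_I_app _).appVars a m

lemma Reduces.app {a a' b b' : Tm} (ha : Reduces a a') (hb : Reduces b b') :
    Reduces (app a b) (app a' b') :=
  (ha.lift (Tm.app · b) fun _ _ => Step.appL b).trans (hb.lift (Tm.app a') fun _ _ => Step.appR a')

lemma Reduces.lamN {t t' : Tm} (h : Reduces t t') (n : ℕ) : Reduces (lamN n t) (lamN n t') := by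
  induction n with
  | zero => exact h
  | succ n ih => exact ih.lift lam fun _ _ => Step.lamCongr

lemma Reduces.betaEta {a b : Tm} (h : Reduces a b) : BetaEta a b :=
  Relation.EqvGen.reflTransGen_le_eqvGen Step _ _ h

lemma Sn_app_app_reduces (n : ℕ) {P Q : Tm} (hP : ClosedAt 0 P) (hQ : ClosedAt 0 Q) :
    Reduces (app (app (Sn n) P) Q) (lamN n (app (appVars P 0 n) (appVars Q 0 n))) := by
  have substP : subst 0 P (lamN (n + 1) (Tm.app (appVars (var (n + 1)) 0 n) (appVars (var n) 0 n)))
      = lamN (n + 1) (Tm.app (appVars P 0 n) (appVars (var n) 0 n)) := by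
    rw [subst_lamN, liftN_eq_self_of_closedAt hP]
    simp [subst, subst_appVars]
  have substQ : subst 0 Q (lamN n (Tm.app (appVars P 0 n) (appVars (var n) 0 n)))
      = lamN n (Tm.app (appVars P 0 n) (appVars Q 0 n)) := by
    rw [subst_lamN, liftN_eq_self_of_closedAt hQ]
    simp [subst, subst_appVars, subst_eq_self_of_closedAt hP (Nat.zero_le _)]
  have stepP : Step (app (Sn n) P) (lamN (n + 1) (Tm.app (appVars P 0 n) (appVars (var n) 0 n))) :=
    substP ▸ .beta _ P
  have stepQ : Step (app (lamN (n + 1) (Tm.app (appVars P 0 n) (appVars (var n) 0 n))) Q)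
      (lamN n (Tm.app (appVars P 0 n) (appVars Q 0 n))) :=
    substQ ▸ .beta _ Q
  exact .head (.appL Q stepP) (.single stepQ)

/-- Under the `n` binders, `x₁ x₂ ⋯ xₙ` is `appVars (var (n - 1)) 0 (n - 1)`. -/
theorem Dn_encoding (n : ℕ) (hn : 1 ≤ n) :
    BetaEta
      (lamN n (app (appVars (var (n - 1)) 0 (n - 1))
                   (appVars (var (n - 1)) 0 (n - 1))))
      (app (app (Sn n) I) I) := by
  obtain ⟨m, rfl⟩ : ∃ m, n = m + 1 := ⟨n - 1, by omega⟩
  rw [Nat.add_sub_cancel]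
  have contract : Reduces (appVars I 0 (m + 1)) (appVars (var m) 0 m) :=
    .single (by simpa using step_appVars_I 0 m)
  refine Relation.EqvGen.symm _ _ (Reduces.betaEta ?_)
  exact (Sn_app_app_reduces (m + 1) closedAt_zero_I closedAt_zero_I).trans
    ((contract.app contract).lamN (m + 1))

end Tm
end LC
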